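/- arXiv:2307.14261 — 3 statements merged into one kernel-verified Lean document; each statement's English description precedes it below -/
import Mathlib

section
/- Let Q be a commutative ring and f ∈ Q a non-zero-divisor. If M is a Q/f-module admitting a presentation 0 → Q^n →^A Q^n → M → 0 (i.e., A is an injective Q-linear endomorphism of Q^n with cokernel M), then there exists a unique n×n matrix B over Q such that A·B = B·A = f·I_n. -/
/-!
STATEMENT 0: Let `Q` be a commutative ring and `f ∈ Q` a non-zero-divisor.  If `M` is a
`Q/f`-module admitting a presentation `0 → Q^n →^A Q^n → M → 0` (i.e. the matrix `A` is
injective as a `Q`-linear endomorphism of `Q^n`, and its cokernel is annihilated by `f`,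
which we express as `f • Q^n ⊆ A · Q^n`), then there is a unique `n × n` matrix `B` over
`Q` with `A * B = B * A = f • 1`.
-/

theorem matrix_factorization_exists_unique
    (Q : Type*) [CommRing Q] (f : Q)
    (hf : ∀ x y : Q, f * x = f * y → x = y)  -- `f` is a non-zero-divisor
    (n : ℕ) (A : Matrix (Fin n) (Fin n) Q)
    (hA : Function.Injective A.mulVecLin)  -- the presentation is a resolution
    (hcoker : ∀ v : Fin n → Q, ∃ w : Fin n → Q, A.mulVec w = f • v)
      -- the cokernel `M` of `A` is annihilated by `f`, i.e. is a `Q/f`-module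
    : ∃! B : Matrix (Fin n) (Fin n) Q,
        A * B = f • (1 : Matrix (Fin n) (Fin n) Q) ∧
        B * A = f • (1 : Matrix (Fin n) (Fin n) Q) := by
  -- cancellation of A on vectors
  have hvec : ∀ x y : Fin n → Q, A.mulVec x = A.mulVec y → x = y := by
    intro x y h
    exact hA (by simpa [Matrix.mulVecLin_apply] using h)
  -- cancellation of A on matrices
  have hmat : ∀ C D : Matrix (Fin n) (Fin n) Q, A * C = A * D → C = D := by
    intro C D h
    ext i j
    have hcol : A.mulVec (fun k => C k j) = A.mulVec (fun k => D k j) := by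
      funext i'
      have := congrFun (congrFun h i') j
      simpa [Matrix.mul_apply, Matrix.mulVec, dotProduct] using this
    exact congrFun (hvec _ _ hcol) i
  -- construct B columnwise
  set B : Matrix (Fin n) (Fin n) Q :=
    Matrix.of (fun i j => Classical.choose (hcoker (Pi.single j 1)) i) with hB
  have hAB : A * B = f • (1 : Matrix (Fin n) (Fin n) Q) := by
    ext i j
    have hspec := Classical.choose_spec (hcoker (Pi.single j 1))
    have := congrFun hspec i
    simpa [hB, Matrix.mul_apply, Matrix.mulVec, dotProduct, Matrix.one_apply,
      Pi.single_apply, mul_comm, eq_comm, Matrix.smul_apply] using this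
  have hBA : B * A = f • (1 : Matrix (Fin n) (Fin n) Q) := by
    apply hmat
    calc A * (B * A) = (A * B) * A := by rw [mul_assoc]
      _ = (f • (1 : Matrix (Fin n) (Fin n) Q)) * A := by rw [hAB]
      _ = A * (f • (1 : Matrix (Fin n) (Fin n) Q)) := by
          rw [Matrix.smul_mul, Matrix.mul_smul, one_mul, mul_one]
  refine ⟨B, ⟨hAB, hBA⟩, ?_⟩
  intro C ⟨hC, _⟩
  exact hmat C B (by rw [hC, hAB])
end

section
/- Let (A,B) be a matrix factorization of f over a commutative k-algebra Q (AB = BA = f·I_n), and let d denote entrywise exterior derivative into matrices over Ω•_{Q/k}. Then for every s ≥ 1, f · tr((dB·dA)^s) = s · df ∧ tr(B·dA·(dB·dA)^{s−1}). -/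
/-!
STATEMENT 9: Let `(A, B)` be a matrix factorization of `f` over a commutative `k`-algebra
`Q` (`A * B = B * A = f • 1`), and let `d` denote the entrywise exterior derivative into
matrices over `Ω•_{Q/k}` (the exterior algebra of Kähler differentials).  Then for every
`s ≥ 1`,
  `f · tr((dB · dA)^s) = s · df ∧ tr(B · dA · (dB · dA)^{s−1})`.
-/

open ExteriorAlgebra Matrix

namespace MFAux

variable {R : Type*} [CommRing R] {V : Type*} [AddCommGroup V] [Module R V]

def IsOddE (x : ExteriorAlgebra R V) : Prop := ∀ v : V, ι R v * x = -(x * ι R v)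
def IsEvenE (x : ExteriorAlgebra R V) : Prop := ∀ v : V, ι R v * x = x * ι R v

theorem isOddE_ι (v : V) : IsOddE (ι R v) := fun w =>
  eq_neg_of_add_eq_zero_left (ExteriorAlgebra.ι_add_mul_swap w v)

theorem isEvenE_algebraMap (r : R) : IsEvenE (algebraMap R (ExteriorAlgebra R V) r) :=
  fun w => (Algebra.commutes r (ι R w)).symm

theorem isOddE_zero : IsOddE (0 : ExteriorAlgebra R V) := fun _ => by simp
theorem isEvenE_zero : IsEvenE (0 : ExteriorAlgebra R V) := fun _ => by simp
theorem isEvenE_one : IsEvenE (1 : ExteriorAlgebra R V) := fun _ => by simp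

theorem IsOddE.add {x y : ExteriorAlgebra R V} (hx : IsOddE x) (hy : IsOddE y) :
    IsOddE (x + y) := fun v => by rw [mul_add, hx v, hy v, add_mul, neg_add]

theorem IsEvenE.add {x y : ExteriorAlgebra R V} (hx : IsEvenE x) (hy : IsEvenE y) :
    IsEvenE (x + y) := fun v => by rw [mul_add, hx v, hy v, add_mul]

theorem IsOddE.mul_odd {x y : ExteriorAlgebra R V} (hx : IsOddE x) (hy : IsOddE y) :
    IsEvenE (x * y) := fun v => by
  rw [← mul_assoc, hx v, neg_mul, mul_assoc, hy v, mul_neg, neg_neg, mul_assoc]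

theorem IsOddE.mul_even {x y : ExteriorAlgebra R V} (hx : IsOddE x) (hy : IsEvenE y) :
    IsOddE (x * y) := fun v => by
  rw [← mul_assoc, hx v, neg_mul, mul_assoc, hy v, ← mul_assoc]

theorem IsEvenE.mul_odd {x y : ExteriorAlgebra R V} (hx : IsEvenE x) (hy : IsOddE y) :
    IsOddE (x * y) := fun v => by
  rw [← mul_assoc, hx v, mul_assoc, hy v, mul_neg, ← mul_assoc]

theorem IsEvenE.mul_even {x y : ExteriorAlgebra R V} (hx : IsEvenE x) (hy : IsEvenE y) :
    IsEvenE (x * y) := fun v => by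
  rw [← mul_assoc, hx v, mul_assoc, hy v, ← mul_assoc]

theorem isOddE_sum {α : Type*} {s : Finset α} {g : α → ExteriorAlgebra R V}
    (h : ∀ a ∈ s, IsOddE (g a)) : IsOddE (∑ a ∈ s, g a) :=
  Finset.sum_induction g IsOddE (fun _ _ ha hb => ha.add hb) isOddE_zero h

theorem isEvenE_sum {α : Type*} {s : Finset α} {g : α → ExteriorAlgebra R V}
    (h : ∀ a ∈ s, IsEvenE (g a)) : IsEvenE (∑ a ∈ s, g a) :=
  Finset.sum_induction g IsEvenE (fun _ _ ha hb => ha.add hb) isEvenE_zero h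

theorem span_mul_odd {x y : ExteriorAlgebra R V}
    (hx : x ∈ Submodule.span R (Set.range (ι R (M := V)))) (hy : IsOddE y) :
    x * y = -(y * x) := by
  induction hx using Submodule.span_induction with
  | mem z hz => obtain ⟨v, rfl⟩ := hz; exact hy v
  | zero => simp
  | add a b _ _ ha hb => rw [add_mul, ha, hb, mul_add, neg_add]
  | smul r a _ ha => rw [smul_mul_assoc, ha, mul_smul_comm, smul_neg]

theorem span_mul_even {x y : ExteriorAlgebra R V}
    (hx : x ∈ Submodule.span R (Set.range (ι R (M := V)))) (hy : IsEvenE y) :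
    x * y = y * x := by
  induction hx using Submodule.span_induction with
  | mem z hz => obtain ⟨v, rfl⟩ := hz; exact hy v
  | zero => simp
  | add a b _ _ ha hb => rw [add_mul, ha, hb, mul_add]
  | smul r a _ ha => rw [smul_mul_assoc, ha, mul_smul_comm]

variable {n : ℕ}

theorem trace_diagonal_mul (ω : ExteriorAlgebra R V)
    (X : Matrix (Fin n) (Fin n) (ExteriorAlgebra R V)) :
    Matrix.trace (Matrix.diagonal (fun _ => ω) * X) = ω * Matrix.trace X := by
  simp [Matrix.trace, Matrix.diag, Matrix.diagonal_mul, Finset.mul_sum]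

theorem trace_mul_anticomm (X Y : Matrix (Fin n) (Fin n) (ExteriorAlgebra R V))
    (hX : ∀ i j, X i j ∈ Submodule.span R (Set.range (ι R (M := V))))
    (hY : ∀ i j, IsOddE (Y i j)) :
    Matrix.trace (X * Y) = -Matrix.trace (Y * X) := by
  simp only [Matrix.trace, Matrix.diag, Matrix.mul_apply]
  rw [Finset.sum_comm (γ := Fin n)]
  rw [← Finset.sum_neg_distrib]
  refine Finset.sum_congr rfl fun i _ => ?_
  rw [← Finset.sum_neg_distrib]
  refine Finset.sum_congr rfl fun j _ => ?_
  exact span_mul_odd (hX j i) (hY i j)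

set_option maxHeartbeats 1600000 in
theorem key (hhalf : IsUnit (2 : ExteriorAlgebra R V))
    (ω φ : ExteriorAlgebra R V)
    (hωspan : ω ∈ Submodule.span R (Set.range (ι R (M := V))))
    (hωodd : IsOddE ω) (hωω : ω * ω = 0)
    (Ab Bb dA dB : Matrix (Fin n) (Fin n) (ExteriorAlgebra R V))
    (hBb : ∀ i j, ∃ b : R, Bb i j = algebraMap R (ExteriorAlgebra R V) b)
    (hdAspan : ∀ i j, dA i j ∈ Submodule.span R (Set.range (ι R (M := V))))
    (hdAodd : ∀ i j, IsOddE (dA i j))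
    (hdBspan : ∀ i j, dB i j ∈ Submodule.span R (Set.range (ι R (M := V))))
    (hdBodd : ∀ i j, IsOddE (dB i j))
    (h1 : dA * Bb + Ab * dB = Matrix.diagonal fun _ => ω)
    (h2 : dB * Ab + Bb * dA = Matrix.diagonal fun _ => ω)
    (hF : Bb * Ab = Matrix.diagonal fun _ => φ) (t : ℕ) :
    φ * Matrix.trace ((dB * dA) ^ (t + 1))
      = (t + 1) • (ω * Matrix.trace (Bb * dA * (dB * dA) ^ t)) := by
  set W : Matrix (Fin n) (Fin n) (ExteriorAlgebra R V) := Matrix.diagonal fun _ => ω with hW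
  set Mm := dB * dA with hMm
  set Nn := Bb * dA with hNn
  have hBbE : ∀ i j, IsEvenE (Bb i j) := fun i j => by
    obtain ⟨b, hb⟩ := hBb i j; rw [hb]; exact isEvenE_algebraMap b
  have hMeven : ∀ i j, IsEvenE (Mm i j) := fun i j => by
    rw [hMm, Matrix.mul_apply]
    exact isEvenE_sum fun c _ => (hdBodd i c).mul_odd (hdAodd c j)
  have hMpow : ∀ u, ∀ i j, IsEvenE ((Mm ^ u) i j) := by
    intro u
    induction u with
    | zero =>
      intro i j
      rw [pow_zero]
      by_cases h : i = j <;> simp [Matrix.one_apply, h, isEvenE_one, isEvenE_zero]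
    | succ u ih =>
      intro i j
      rw [pow_succ, Matrix.mul_apply]
      exact isEvenE_sum fun c _ => (ih i c).mul_even (hMeven c j)
  have hNodd : ∀ i j, IsOddE (Nn i j) := fun i j => by
    rw [hNn, Matrix.mul_apply]
    exact isOddE_sum fun c _ => (hBbE i c).mul_odd (hdAodd c j)
  have hNspan : ∀ i j, Nn i j ∈ Submodule.span R (Set.range (ι R (M := V))) := by
    intro i j
    rw [hNn, Matrix.mul_apply]
    refine Submodule.sum_mem _ fun c _ => ?_
    obtain ⟨b, hb⟩ := hBb i c
    rw [hb, ← Algebra.smul_def]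
    exact Submodule.smul_mem _ _ (hdAspan c j)
  -- commutation with W
  have hdBW : dB * W = -(W * dB) := by
    ext i j
    simp only [hW, Matrix.mul_diagonal, Matrix.diagonal_mul, Matrix.neg_apply]
    exact span_mul_odd (hdBspan i j) hωodd
  have hNW : Nn * W = -(W * Nn) := by
    ext i j
    simp only [hW, Matrix.mul_diagonal, Matrix.diagonal_mul, Matrix.neg_apply]
    exact span_mul_odd (hNspan i j) hωodd
  have hBbW : Bb * W = W * Bb := by
    ext i j
    simp only [hW, Matrix.mul_diagonal, Matrix.diagonal_mul]
    exact (span_mul_even hωspan (hBbE i j)).symm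
  have hWM : W * Mm = Mm * W := by
    ext i j
    simp only [hW, Matrix.mul_diagonal, Matrix.diagonal_mul]
    exact span_mul_even hωspan (hMeven i j)
  have hWMu : ∀ u, W * Mm ^ u = Mm ^ u * W := by
    intro u
    induction u with
    | zero => simp
    | succ u ih => rw [pow_succ, ← mul_assoc, ih, mul_assoc, hWM, ← mul_assoc]
  -- the two structural equations
  have e1 : Ab * dB = W - dA * Bb := by rw [← h1]; abel
  have e2 : dB * Ab = W - Nn := by rw [← h2, hNn]; abel
  have e1' : dA * Bb = W - Ab * dB := by rw [← h1]; abel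
  have hMN : Mm * Nn = Nn * Mm - W * Mm - W * Mm := by
    calc Mm * Nn = dB * ((dA * Bb) * dA) := by rw [hMm, hNn]; noncomm_ring
      _ = dB * ((W - Ab * dB) * dA) := by rw [e1']
      _ = (dB * W) * dA - (dB * Ab) * (dB * dA) := by noncomm_ring
      _ = (-(W * dB)) * dA - (W - Nn) * (dB * dA) := by rw [hdBW, e2]
      _ = Nn * Mm - W * Mm - W * Mm := by rw [hMm]; noncomm_ring
  have hMuN : ∀ u, Mm ^ u * Nn = Nn * Mm ^ u - (2 * u) • (W * Mm ^ u) := by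
    intro u
    induction u with
    | zero => simp
    | succ u ih =>
      have h2u : (2 * (u + 1)) • (W * Mm ^ (u + 1))
          = (2 * u) • (W * Mm ^ (u + 1)) + (W * Mm ^ (u + 1)) + (W * Mm ^ (u + 1)) := by
        have h : 2 * (u + 1) = 2 * u + 1 + 1 := by ring
        rw [h, add_nsmul, add_nsmul, one_nsmul]
      calc Mm ^ (u + 1) * Nn = Mm ^ u * (Mm * Nn) := by rw [pow_succ, mul_assoc]
        _ = Mm ^ u * (Nn * Mm) - Mm ^ u * (W * Mm) - Mm ^ u * (W * Mm) := by
            rw [hMN]; noncomm_ring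
        _ = (Mm ^ u * Nn) * Mm - ((W * Mm ^ u) * Mm) - ((W * Mm ^ u) * Mm) := by
            simp only [← mul_assoc]; rw [← hWMu u]
        _ = (Nn * Mm ^ u - (2 * u) • (W * Mm ^ u)) * Mm
              - W * Mm ^ (u + 1) - W * Mm ^ (u + 1) := by
            rw [ih, pow_succ]; simp only [mul_assoc]
        _ = Nn * Mm ^ (u + 1) - (2 * u) • (W * Mm ^ (u + 1))
              - W * Mm ^ (u + 1) - W * Mm ^ (u + 1) := by
            rw [sub_mul, smul_mul_assoc, pow_succ]; simp only [mul_assoc]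
        _ = Nn * Mm ^ (u + 1) - (2 * (u + 1)) • (W * Mm ^ (u + 1)) := by rw [h2u]; abel
  -- supertrace argument
  have hNMt_odd : ∀ i j, IsOddE ((Nn * Mm ^ t) i j) := fun i j => by
    rw [Matrix.mul_apply]
    exact isOddE_sum fun c _ => (hNodd i c).mul_even (hMpow t c j)
  have hTrW : ∀ X : Matrix (Fin n) (Fin n) (ExteriorAlgebra R V),
      Matrix.trace (W * X) = ω * Matrix.trace X := fun X => trace_diagonal_mul ω X
  set τ := Matrix.trace (Nn * Mm ^ t) with hτ
  set T := Matrix.trace (Nn * Nn * Mm ^ t) with hT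
  have hcyc : T = -Matrix.trace ((Nn * Mm ^ t) * Nn) := by
    rw [hT, mul_assoc]
    exact trace_mul_anticomm _ _ hNspan hNMt_odd
  have hNWMt : Nn * (W * Mm ^ t) = -(W * (Nn * Mm ^ t)) := by
    rw [← mul_assoc, hNW, neg_mul, mul_assoc]
  have hback : (Nn * Mm ^ t) * Nn = Nn * Nn * Mm ^ t - (2 * t) • (Nn * (W * Mm ^ t)) := by
    rw [mul_assoc, hMuN t, mul_sub, mul_smul_comm, ← mul_assoc]
  have hstep : Matrix.trace ((Nn * Mm ^ t) * Nn) = T - (2 * t) • (-(ω * τ)) := by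
    rw [hback, Matrix.trace_sub, Matrix.trace_smul, hNWMt, Matrix.trace_neg, hTrW, ← hτ, ← hT]
  have hTT : T + T = (2 * t) • (-(ω * τ)) := by
    have h' : T = -(T - (2 * t) • (-(ω * τ))) := by rw [← hstep]; exact hcyc
    rw [neg_sub] at h'
    exact eq_sub_iff_add_eq.mp h'
  have hTval : T = t • (-(ω * τ)) := by
    have h2T : (2 : ExteriorAlgebra R V) * T = 2 * (t • (-(ω * τ))) := by
      calc (2 : ExteriorAlgebra R V) * T = T + T := by rw [two_mul]
        _ = (2 * t) • (-(ω * τ)) := hTT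
        _ = 2 • t • (-(ω * τ)) := by rw [mul_smul]
        _ = 2 * (t • (-(ω * τ))) := by rw [two_smul, two_mul]
    exact hhalf.mul_left_cancel h2T
  -- main computation
  have hFstep : (Matrix.diagonal fun _ => φ) * Mm ^ (t + 1)
      = W * (Nn * Mm ^ t) - Nn * Nn * Mm ^ t := by
    calc (Matrix.diagonal fun _ => φ) * Mm ^ (t + 1)
        = (Bb * Ab) * (Mm * Mm ^ t) := by rw [hF, pow_succ']
      _ = Bb * ((Ab * dB) * (dA * Mm ^ t)) := by rw [hMm]; noncomm_ring
      _ = Bb * ((W - dA * Bb) * (dA * Mm ^ t)) := by rw [e1]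
      _ = (Bb * W) * (dA * Mm ^ t) - ((Bb * dA) * (Bb * dA)) * Mm ^ t := by noncomm_ring
      _ = W * (Nn * Mm ^ t) - Nn * Nn * Mm ^ t := by
          rw [hBbW, hNn]; simp only [mul_assoc]
  have hmain : φ * Matrix.trace (Mm ^ (t + 1)) = ω * τ + t • (ω * τ) := by
    rw [← trace_diagonal_mul φ (Mm ^ (t + 1)), hFstep, Matrix.trace_sub, hTrW, ← hτ, ← hT,
      hTval, smul_neg, sub_neg_eq_add]
  rw [hmain, succ_nsmul]
  exact add_comm _ _

end MFAux
namespace MFAux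

variable (k Q : Type*) [CommRing k] [CommRing Q] [Algebra k Q]

noncomputable def dd : Q → ExteriorAlgebra Q (KaehlerDifferential k Q) :=
  fun a => ExteriorAlgebra.ι Q (KaehlerDifferential.D k Q a)

theorem dd_leibniz (a b : Q) :
    dd k Q (a * b) = dd k Q a * algebraMap Q _ b + algebraMap Q _ a * dd k Q b := by
  simp only [dd, Derivation.leibniz, map_add, LinearMap.map_smul, Algebra.smul_def]
  rw [Algebra.commutes b]
  exact add_comm _ _

theorem map_dd_mul {n : ℕ} (X Y : Matrix (Fin n) (Fin n) Q) :
    (X * Y).map (dd k Q)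
      = X.map (dd k Q) * Y.map (algebraMap Q (ExteriorAlgebra Q (KaehlerDifferential k Q)))
        + X.map (algebraMap Q (ExteriorAlgebra Q (KaehlerDifferential k Q)))
            * Y.map (dd k Q) := by
  ext i j
  simp only [Matrix.map_apply, Matrix.mul_apply, Matrix.add_apply]
  have hsum : dd k Q (∑ c, X i c * Y c j) = ∑ c, dd k Q (X i c * Y c j) := by
    simp [dd, map_sum]
  rw [hsum, ← Finset.sum_add_distrib]
  exact Finset.sum_congr rfl fun c _ => dd_leibniz k Q _ _

theorem map_dd_smul_one {n : ℕ} (f : Q) :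
    (f • (1 : Matrix (Fin n) (Fin n) Q)).map (dd k Q)
      = Matrix.diagonal fun _ => dd k Q f := by
  ext i j
  by_cases h : i = j
  · subst h
    simp [Matrix.map_apply, Matrix.diagonal_apply, Matrix.one_apply, smul_eq_mul]
  · simp [Matrix.map_apply, Matrix.diagonal_apply, Matrix.one_apply, h, smul_eq_mul, dd]

theorem map_alg_smul_one {n : ℕ} (f : Q) :
    (f • (1 : Matrix (Fin n) (Fin n) Q)).map
        (algebraMap Q (ExteriorAlgebra Q (KaehlerDifferential k Q)))
      = Matrix.diagonal fun _ => algebraMap Q (ExteriorAlgebra Q (KaehlerDifferential k Q)) f := by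
  ext i j
  by_cases h : i = j
  · subst h
    simp [Matrix.map_apply, Matrix.diagonal_apply, Matrix.one_apply, smul_eq_mul]
  · simp [Matrix.map_apply, Matrix.diagonal_apply, Matrix.one_apply, h, smul_eq_mul]

end MFAux

theorem trace_matrix_factorization_identity
    (k : Type*) [Field k] [CharZero k]
    (Q : Type*) [CommRing Q] [Algebra k Q]
    (f : Q) (n : ℕ) (A B : Matrix (Fin n) (Fin n) Q)
    (hAB : A * B = f • (1 : Matrix (Fin n) (Fin n) Q))
    (hBA : B * A = f • (1 : Matrix (Fin n) (Fin n) Q))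
    (s : ℕ) (hs : 1 ≤ s) :
    -- `Λ = Ω•_{Q/k}` and `dE` is the entrywise exterior derivative
    letI Λ := ExteriorAlgebra Q (KaehlerDifferential k Q)
    letI dE : Q → Λ := fun a => ExteriorAlgebra.ι Q (KaehlerDifferential.D k Q a)
    letI dA := A.map dE
    letI dB := B.map dE
    algebraMap Q Λ f * Matrix.trace ((dB * dA) ^ s)
      = s • (dE f * Matrix.trace (B.map (algebraMap Q Λ) * dA * (dB * dA) ^ (s - 1))) := by
  classical
  obtain ⟨t, rfl⟩ : ∃ t, s = t + 1 := ⟨s - 1, (Nat.succ_pred_eq_of_pos hs).symm⟩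
  have h2k : IsUnit (2 : k) := isUnit_iff_ne_zero.mpr two_ne_zero
  have h2Q : IsUnit (2 : Q) := by
    have := h2k.map (algebraMap k Q); rwa [map_ofNat] at this
  have hhalf : IsUnit (2 : ExteriorAlgebra Q (KaehlerDifferential k Q)) := by
    have := h2Q.map (algebraMap Q (ExteriorAlgebra Q (KaehlerDifferential k Q)))
    rwa [map_ofNat] at this
  have h1 : A.map (MFAux.dd k Q) * B.map (algebraMap Q _)
      + A.map (algebraMap Q _) * B.map (MFAux.dd k Q)
      = Matrix.diagonal (fun _ => MFAux.dd k Q f) := by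
    rw [← MFAux.map_dd_mul, hAB, MFAux.map_dd_smul_one]
  have h2 : B.map (MFAux.dd k Q) * A.map (algebraMap Q _)
      + B.map (algebraMap Q _) * A.map (MFAux.dd k Q)
      = Matrix.diagonal (fun _ => MFAux.dd k Q f) := by
    rw [← MFAux.map_dd_mul, hBA, MFAux.map_dd_smul_one]
  have hF : B.map (algebraMap Q (ExteriorAlgebra Q (KaehlerDifferential k Q)))
      * A.map (algebraMap Q (ExteriorAlgebra Q (KaehlerDifferential k Q)))
      = Matrix.diagonal (fun _ => algebraMap Q (ExteriorAlgebra Q (KaehlerDifferential k Q)) f) := by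
    rw [← Matrix.map_mul, hBA, MFAux.map_alg_smul_one]
  have hkey := MFAux.key (R := Q) (V := KaehlerDifferential k Q) (n := n) hhalf
      (MFAux.dd k Q f) (algebraMap Q (ExteriorAlgebra Q (KaehlerDifferential k Q)) f)
      (Submodule.subset_span ⟨_, rfl⟩) (MFAux.isOddE_ι _) (ExteriorAlgebra.ι_sq_zero _)
      (A.map (algebraMap Q _)) (B.map (algebraMap Q _))
      (A.map (MFAux.dd k Q)) (B.map (MFAux.dd k Q))
      (fun i j => ⟨B i j, rfl⟩)
      (fun i j => Submodule.subset_span ⟨_, rfl⟩)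
      (fun i j => MFAux.isOddE_ι _)
      (fun i j => Submodule.subset_span ⟨_, rfl⟩)
      (fun i j => MFAux.isOddE_ι _)
      h1 h2 hF t
  simp only [Nat.add_sub_cancel]
  exact hkey
end

section
/- Let (A,B) be an n×n matrix factorization of f over a commutative k-algebra Q (char k = 0), with A invertible over Q[1/f]. Then for each s ≥ 1, tr(A^{-1} dA (dA^{-1} dA)^{s−1}) = f^{-s}·tr(B·dA·(dB·dA)^{s−1}) as forms in Ω^{2s−1}_{Q[1/f]/k}. -/
/-!
STATEMENT 15: Let `(A, B)` be an `n × n` matrix factorization of `f` over a commutative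
`k`-algebra `Q` (`char k = 0`), so `A * B = B * A = f • 1`, with `A` invertible over
`Q[1/f]`.  Then for each `s ≥ 1`,
  `tr(A⁻¹ dA (dA⁻¹ dA)^{s−1}) = f^{−s} · tr(B · dA · (dB · dA)^{s−1})`
as forms in `Ω^{2s−1}_{Q[1/f]/k}` (inside the exterior algebra of Kähler differentials of
`Q[1/f]` over `k`).
-/


section Aux
variable {R : Type*} [CommRing R] {M : Type*} [AddCommGroup M] [Module R M]
variable {ni : Type*} [Fintype ni] [DecidableEq ni]

open ExteriorAlgebra Matrix

local notation "Λ" => ExteriorAlgebra R M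

lemma aux_anticomm {x y : Λ}
    (hx : x ∈ LinearMap.range (ExteriorAlgebra.ι R (M := M)))
    (hy : y ∈ LinearMap.range (ExteriorAlgebra.ι R (M := M))) :
    x * y = -(y * x) := by
  obtain ⟨v, rfl⟩ := hx
  obtain ⟨w, rfl⟩ := hy
  exact eq_neg_of_add_eq_zero_left (ExteriorAlgebra.ι_add_mul_swap v w)

private lemma swap2 {x b c : Λ} (h1 : x * b = -(b * x)) (h2 : x * c = -(c * x)) :
    x * (b * c) = (b * c) * x := by
  calc x * (b * c) = (x * b) * c := (mul_assoc _ _ _).symm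
    _ = -((b * x) * c) := by rw [h1, neg_mul]
    _ = -(b * (x * c)) := by rw [mul_assoc]
    _ = -(b * -(c * x)) := by rw [h2]
    _ = (b * c) * x := by rw [mul_neg, neg_neg, ← mul_assoc]

private lemma swap3 {x a w : Λ} (h1 : x * a = -(a * x)) (h2 : x * w = w * x) :
    x * (a * w) = -((a * w) * x) := by
  calc x * (a * w) = (x * a) * w := (mul_assoc _ _ _).symm
    _ = -((a * x) * w) := by rw [h1, neg_mul]
    _ = -(a * (x * w)) := by rw [mul_assoc]
    _ = -(a * (w * x)) := by rw [h2]
    _ = -((a * w) * x) := by rw [← mul_assoc]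

lemma aux_odd (X : Matrix ni ni Λ)
    (hX : ∀ i j, X i j ∈ LinearMap.range (ExteriorAlgebra.ι R (M := M))) :
    ∀ (m : ℕ) (i j p q : ni),
      X i j * (X ^ (2*m+1)) p q = -((X ^ (2*m+1)) p q * X i j) := by
  intro m
  induction m with
  | zero =>
    intro i j p q
    simpa using aux_anticomm (hX i j) (hX p q)
  | succ m ih =>
    intro i j p q
    have he : 2*(m+1)+1 = (2*m+1)+2 := by ring
    have hpow : X ^ (2*(m+1)+1) = X ^ (2*m+1) * (X * X) := by
      rw [he, pow_add, pow_two]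
    rw [hpow, Matrix.mul_apply, Finset.mul_sum, Finset.sum_mul, ← Finset.sum_neg_distrib]
    refine Finset.sum_congr rfl fun u _ => ?_
    have hxw : X i j * ((X * X) u q) = ((X * X) u q) * X i j := by
      rw [Matrix.mul_apply, Finset.mul_sum, Finset.sum_mul]
      refine Finset.sum_congr rfl fun v _ => ?_
      exact swap2 (aux_anticomm (hX i j) (hX u v)) (aux_anticomm (hX i j) (hX v q))
    exact swap3 (ih i j p u) hxw

lemma aux_trace_even_zero (h2 : Invertible (2 : R)) (X : Matrix ni ni Λ)
    (hX : ∀ i j, X i j ∈ LinearMap.range (ExteriorAlgebra.ι R (M := M))) (m : ℕ) :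
    Matrix.trace (X ^ (2*m+2)) = 0 := by
  have e1 : Matrix.trace (X ^ (2*m+2)) = ∑ i, ∑ u, X i u * (X ^ (2*m+1)) u i := by
    have : X ^ (2*m+2) = X * X ^ (2*m+1) := by
      rw [← pow_succ']
    rw [this]
    simp [Matrix.trace, Matrix.diag, Matrix.mul_apply]
  have e2 : Matrix.trace (X ^ (2*m+2)) = ∑ i, ∑ u, (X ^ (2*m+1)) i u * X u i := by
    have : X ^ (2*m+2) = X ^ (2*m+1) * X := by
      rw [← pow_succ]
    rw [this]
    simp [Matrix.trace, Matrix.diag, Matrix.mul_apply]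
  have key : Matrix.trace (X ^ (2*m+2)) = -Matrix.trace (X ^ (2*m+2)) := by
    calc Matrix.trace (X ^ (2*m+2)) = ∑ i, ∑ u, X i u * (X ^ (2*m+1)) u i := e1
      _ = ∑ i, ∑ u, -((X ^ (2*m+1)) u i * X i u) := by
          exact Finset.sum_congr rfl fun i _ => Finset.sum_congr rfl fun u _ =>
            aux_odd X hX m i u u i
      _ = -∑ u, ∑ i, (X ^ (2*m+1)) u i * X i u := by
          rw [← Finset.sum_neg_distrib]
          simp_rw [← Finset.sum_neg_distrib]
          rw [Finset.sum_comm]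
      _ = -Matrix.trace (X ^ (2*m+2)) := by rw [← e2]
  have h0 : (2 : R) • Matrix.trace (X ^ (2*m+2)) = 0 := by
    rw [two_smul]
    nth_rewrite 1 [key]
    exact neg_add_cancel _
  calc Matrix.trace (X ^ (2*m+2))
      = ⅟(2:R) • ((2:R) • Matrix.trace (X ^ (2*m+2))) := (invOf_smul_smul _ _).symm
    _ = 0 := by rw [h0, smul_zero]

lemma aux_trace_mul_scalar (Mm : Matrix ni ni Λ) (c : Λ) :
    Matrix.trace (Mm * Matrix.scalar ni c) = Matrix.trace Mm * c := by
  simp [Matrix.trace, Matrix.diag, Matrix.scalar_apply, Matrix.mul_diagonal, Finset.sum_mul]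

lemma aux_trace_scalar_mul (Mm : Matrix ni ni Λ) (c : Λ) :
    Matrix.trace (Matrix.scalar ni c * Mm) = c * Matrix.trace Mm := by
  simp [Matrix.trace, Matrix.diag, Matrix.scalar_apply, Matrix.diagonal_mul, Finset.mul_sum]

lemma aux_core (h2 : Invertible (2 : R)) (X : Matrix ni ni Λ)
    (hX : ∀ i j, X i j ∈ LinearMap.range (ExteriorAlgebra.ι R (M := M)))
    {c : Λ} (hc : c ∈ LinearMap.range (ExteriorAlgebra.ι R (M := M))) (t : ℕ) :
    Matrix.trace (X * (X * X + X * Matrix.scalar ni c) ^ t)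
      = Matrix.trace (X ^ (2*t+1)) := by
  set cm : Matrix ni ni Λ := Matrix.scalar ni c with hcm
  have hcX : cm * X = -(X * cm) := by
    ext i j
    show (cm * X) i j = (-(X * cm)) i j
    rw [hcm, Matrix.scalar_apply, Matrix.neg_apply, Matrix.diagonal_mul, Matrix.mul_diagonal]
    exact aux_anticomm hc (hX i j)
  have hcXX : cm * (X * X) = (X * X) * cm := by
    calc cm * (X * X) = (cm * X) * X := (mul_assoc _ _ _).symm
      _ = -((X * cm) * X) := by rw [hcX, neg_mul]
      _ = -(X * (cm * X)) := by rw [mul_assoc]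
      _ = X * (X * cm) := by rw [hcX, mul_neg, neg_neg]
      _ = (X * X) * cm := (mul_assoc _ _ _).symm
  have hcc : cm * cm = 0 := by
    obtain ⟨v, rfl⟩ := hc
    rw [hcm, ← RingHom.map_mul, ExteriorAlgebra.ι_sq_zero, map_zero]
  have key : ∀ r : ℕ, X * (X * X + X * cm) ^ r = X ^ (2*r+1) + r • (X ^ (2*r) * cm) := by
    intro r
    induction r with
    | zero => simp
    | succ r ih =>
      rw [pow_succ, ← mul_assoc, ih]
      rw [add_mul, mul_add, mul_add, smul_mul_assoc, smul_mul_assoc]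
      have t1 : X ^ (2*r+1) * (X * X) = X ^ (2*(r+1)+1) := by
        rw [← pow_two, ← pow_add]
        congr 1
      have t2 : X ^ (2*r+1) * (X * cm) = X ^ (2*(r+1)) * cm := by
        rw [← mul_assoc, ← pow_succ]
        congr 1
      have t3 : (X ^ (2*r) * cm) * (X * X) = X ^ (2*(r+1)) * cm := by
        rw [mul_assoc, hcXX, ← mul_assoc, ← pow_two, ← pow_add]
        congr 2
      have t4 : (X ^ (2*r) * cm) * (X * cm) = 0 := by
        calc (X ^ (2*r) * cm) * (X * cm) = X ^ (2*r) * ((cm * X) * cm) := by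
              rw [mul_assoc, mul_assoc]
          _ = X ^ (2*r) * (-(X * cm) * cm) := by rw [hcX]
          _ = 0 := by rw [neg_mul, mul_assoc, hcc, mul_zero, neg_zero, mul_zero]
      rw [t1, t2, t3, t4, smul_zero, add_zero, add_assoc, succ_nsmul]
      rw [add_comm (r • (X ^ (2*(r+1)) * cm))]
  rw [key t, Matrix.trace_add, Matrix.trace_smul]
  have hz : t • Matrix.trace (X ^ (2*t) * cm) = 0 := by
    cases t with
    | zero => simp
    | succ r =>
      rw [hcm, aux_trace_mul_scalar]
      have : 2*(r+1) = 2*r+2 := by ring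
      rw [this, aux_trace_even_zero h2 X hX r, zero_mul, smul_zero]
  rw [hz, add_zero]

end Aux

section Main
variable {k : Type*} [Field k] [CharZero k]
variable {L : Type*} [CommRing L] [Algebra k L]
variable {n : ℕ}

open ExteriorAlgebra Matrix

local notation "ΛL" => ExteriorAlgebra L (KaehlerDifferential k L)

set_option maxHeartbeats 2000000 in
lemma main_aux (f' g : L) (hfg : f' * g = 1)
    (A' B' : Matrix (Fin n) (Fin n) L)
    (hAB : A' * B' = f' • (1 : Matrix (Fin n) (Fin n) L))
    (hBA : B' * A' = f' • (1 : Matrix (Fin n) (Fin n) L)) (t : ℕ) :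
    Matrix.trace ((Ring.inverse A').map (algebraMap L ΛL)
        * A'.map (fun a => ExteriorAlgebra.ι L (KaehlerDifferential.D k L a))
        * (((Ring.inverse A').map (fun a => ExteriorAlgebra.ι L (KaehlerDifferential.D k L a))
            * A'.map (fun a => ExteriorAlgebra.ι L (KaehlerDifferential.D k L a))) ^ t))
      = algebraMap L ΛL (g ^ (t+1)) *
          Matrix.trace (B'.map (algebraMap L ΛL)
            * A'.map (fun a => ExteriorAlgebra.ι L (KaehlerDifferential.D k L a))
            * ((B'.map (fun a => ExteriorAlgebra.ι L (KaehlerDifferential.D k L a))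
                * A'.map (fun a => ExteriorAlgebra.ι L (KaehlerDifferential.D k L a))) ^ t)) := by
  set φ := algebraMap L ΛL with hφ
  set dE : L → ΛL := fun a => ExteriorAlgebra.ι L (KaehlerDifferential.D k L a) with hdE
  set dA := A'.map dE with hdA
  set dB := B'.map dE with hdB
  set Ab := A'.map φ with hAb
  set Bb := B'.map φ with hBb
  set X := Bb * dA with hXdef
  set dAinv := (Ring.inverse A').map dE with hdAinvdef
  set c : ΛL := dE f' with hc
  set cm : Matrix (Fin n) (Fin n) ΛL := Matrix.scalar (Fin n) c with hcmdef
  set sΦ : L → Matrix (Fin n) (Fin n) ΛL := fun a => Matrix.scalar (Fin n) (φ a) with hsΦ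
  -- invertibility of 2
  have h2L : Invertible (2 : L) := by
    have h2k : Invertible (2 : k) := invertibleOfNonzero two_ne_zero
    have := Invertible.map (algebraMap k L) (2 : k)
    rwa [map_ofNat] at this
  -- additive hom version of dE
  have hdEadd : ∀ x y : L, dE (x + y) = dE x + dE y := by
    intro x y; simp [hdE]
  let dE0 : L →+ ΛL :=
    { toFun := dE
      map_zero' := by simp [hdE]
      map_add' := hdEadd }
  have hdEsum : ∀ (F : Fin n → L), dE (∑ u, F u) = ∑ u, dE (F u) := by
    intro F; exact map_sum dE0 F Finset.univ
  -- Leibniz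
  have hleib : ∀ a b : L, dE (a * b) = φ a * dE b + φ b * dE a := by
    intro a b
    simp only [hdE]
    rw [Derivation.leibniz, map_add, LinearMap.map_smul, LinearMap.map_smul,
      Algebra.smul_def, Algebra.smul_def]
  have hd1 : dE 1 = 0 := by simp [hdE]
  -- memberships
  have hcmem : c ∈ LinearMap.range (ExteriorAlgebra.ι L (M := KaehlerDifferential k L)) :=
    ⟨KaehlerDifferential.D k L f', rfl⟩
  have hXmem : ∀ i j, X i j ∈
      LinearMap.range (ExteriorAlgebra.ι L (M := KaehlerDifferential k L)) := by
    intro i j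
    rw [hXdef, Matrix.mul_apply]
    refine Submodule.sum_mem _ fun u _ => ?_
    refine ⟨B' i u • KaehlerDifferential.D k L (A' u j), ?_⟩
    rw [_root_.map_smul, Algebra.smul_def]
    rfl
  -- scalar helpers
  have hscomm : ∀ (x : L) (Mx : Matrix (Fin n) (Fin n) ΛL),
      Mx * Matrix.scalar (Fin n) (φ x) = Matrix.scalar (Fin n) (φ x) * Mx := by
    intro x Mx
    exact (Matrix.scalar_commute (φ x) (fun r' => Algebra.commutes x r') Mx).symm.eq
  have hsapply : ∀ (x : L) (Mx : Matrix (Fin n) (Fin n) ΛL) (i j : Fin n),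
      (sΦ x * Mx) i j = φ x * Mx i j := by
    intro x Mx i j
    simp only [hsΦ]
    rw [Matrix.scalar_apply, Matrix.diagonal_mul]
  have hsmul : ∀ (x : L) (Mx Nx : Matrix (Fin n) (Fin n) ΛL),
      Mx * (sΦ x * Nx) = sΦ x * (Mx * Nx) := by
    intro x Mx Nx
    simp only [hsΦ]
    rw [← mul_assoc, hscomm, mul_assoc]
  have hsmul2 : ∀ (x y : L), sΦ x * sΦ y = sΦ (x * y) := by
    intro x y
    simp only [hsΦ]
    rw [← _root_.map_mul (Matrix.scalar (Fin n)), ← _root_.map_mul φ]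
  have hsone : sΦ (1 : L) = 1 := by
    simp only [hsΦ]; rw [_root_.map_one φ, _root_.map_one]
  have hsneg : ∀ x : L, sΦ (-x) = -(sΦ x) := by
    intro x; simp only [hsΦ]; rw [_root_.map_neg φ, _root_.map_neg]
  have hspow : ∀ (x : L) (m : ℕ), (sΦ x) ^ m = sΦ (x ^ m) := by
    intro x m; simp only [hsΦ]; rw [← _root_.map_pow, ← _root_.map_pow φ]
  -- the two matrix-factorization relations over ΛL
  have hmapmulA : Ab * dB + dA * Bb = cm := by
    ext i j
    rw [Matrix.add_apply, Matrix.mul_apply, Matrix.mul_apply, ← Finset.sum_add_distrib]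
    have step : ∀ u ∈ Finset.univ, Ab i u * dB u j + dA i u * Bb u j
        = dE (A' i u * B' u j) := by
      intro u _
      rw [hleib]
      congr 1
      exact (Algebra.commutes (B' u j) (dE (A' i u))).symm
    rw [Finset.sum_congr rfl step, ← hdEsum]
    have e0 : (∑ u, A' i u * B' u j) = (f' • (1 : Matrix (Fin n) (Fin n) L)) i j := by
      rw [← Matrix.mul_apply, hAB]
    rw [e0]
    by_cases hij : i = j
    · subst hij
      rw [Matrix.smul_apply, Matrix.one_apply_eq, smul_eq_mul, mul_one,
        hcmdef, Matrix.scalar_apply, Matrix.diagonal_apply_eq, hc]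
    · rw [Matrix.smul_apply, Matrix.one_apply_ne hij, smul_eq_mul, mul_zero,
        hcmdef, Matrix.scalar_apply, Matrix.diagonal_apply_ne _ hij]
      exact map_zero dE0
  have hR2 : Bb * Ab = sΦ f' := by
    rw [hBb, hAb, ← Matrix.map_mul, hBA]
    ext i j
    by_cases hij : i = j
    · subst hij
      rw [Matrix.map_apply, Matrix.smul_apply, Matrix.one_apply_eq, smul_eq_mul, mul_one]
      simp only [hsΦ]
      rw [Matrix.scalar_apply, Matrix.diagonal_apply_eq]
    · rw [Matrix.map_apply, Matrix.smul_apply, Matrix.one_apply_ne hij, smul_eq_mul,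
        mul_zero, map_zero]
      simp only [hsΦ]
      rw [Matrix.scalar_apply, Matrix.diagonal_apply_ne _ hij]
  have hcX : cm * X = -(X * cm) := by
    ext i j
    rw [Matrix.neg_apply, hcmdef, Matrix.scalar_apply, Matrix.diagonal_mul, Matrix.mul_diagonal]
    exact aux_anticomm hcmem (hXmem i j)
  have hBbcm : Bb * cm = cm * Bb := by
    ext i j
    rw [hcmdef, Matrix.scalar_apply, Matrix.mul_diagonal, Matrix.diagonal_mul]
    exact Algebra.commutes (B' i j) c
  have hrel : X * X = -(X * cm) - sΦ f' * (dB * dA) := by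
    have hdABb : dA * Bb = cm - Ab * dB := by
      rw [← hmapmulA, add_sub_cancel_left]
    have e1 : X * X = Bb * ((dA * Bb) * dA) := by rw [hXdef]; noncomm_ring
    rw [e1, hdABb]
    have e2 : Bb * ((cm - Ab * dB) * dA) = (Bb * cm) * dA - (Bb * Ab) * (dB * dA) := by
      noncomm_ring
    rw [e2, hBbcm, hR2, mul_assoc, ← hXdef, hcX]
  -- derivative of g
  have hdg : dE g = -(φ (g * g) * c) := by
    have h0 : φ f' * dE g + φ g * dE f' = 0 := by rw [← hleib, hfg, hd1]
    have h1 : φ f' * dE g = -(φ g * dE f') := eq_neg_of_add_eq_zero_left h0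
    have h2 : dE g = φ g * (φ f' * dE g) := by
      rw [← mul_assoc, ← _root_.map_mul φ, mul_comm g f', hfg, _root_.map_one φ, one_mul]
    rw [h2, h1, mul_neg, ← mul_assoc, ← _root_.map_mul φ, ← hc]
  -- inverse of A'
  have hInv : Ring.inverse A' = g • B' := by
    have hu1 : A' * (g • B') = 1 := by
      rw [Matrix.mul_smul, hAB, smul_smul, mul_comm g f', hfg, one_smul]
    have hu2 : (g • B') * A' = 1 := by
      rw [Matrix.smul_mul, hBA, smul_smul, mul_comm g f', hfg, one_smul]
    exact Ring.inverse_unit ⟨A', g • B', hu1, hu2⟩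
  have hAinvφ : (Ring.inverse A').map φ = sΦ g * Bb := by
    rw [hInv]
    ext i j
    rw [Matrix.map_apply, Matrix.smul_apply, smul_eq_mul, _root_.map_mul, hsapply]
    rfl
  have hdAinv : dAinv = sΦ g * dB - sΦ (g*g) * (Bb * cm) := by
    rw [hdAinvdef, hInv]
    ext i j
    rw [Matrix.map_apply, Matrix.smul_apply, smul_eq_mul, hleib, hdg, Matrix.sub_apply,
      hsapply, hsapply]
    have e3 : (Bb * cm) i j = Bb i j * c := by
      rw [hcmdef, Matrix.scalar_apply, Matrix.mul_diagonal]
    rw [e3]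
    have e4 : φ (B' i j) * (φ (g * g) * c) = φ (g * g) * (Bb i j * c) := by
      show φ (B' i j) * (φ (g * g) * c) = φ (g * g) * (φ (B' i j) * c)
      rw [← mul_assoc, ← mul_assoc, ← _root_.map_mul φ, ← _root_.map_mul φ, mul_comm (B' i j)]
    rw [mul_neg, e4, sub_eq_add_neg]
    rfl
  -- dAinv * dA = sΦ (-(g*g)) * (X * X)
  have hsggf : (g*g) * f' = g := by rw [mul_assoc, mul_comm g f', hfg, mul_one]
  have step1 : dAinv * dA = sΦ g * (dB * dA) + sΦ (g*g) * (X * cm) := by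
    rw [hdAinv]
    have e : (Bb * cm) * dA = -(X * cm) := by
      rw [hBbcm, mul_assoc, ← hXdef, hcX]
    calc (sΦ g * dB - sΦ (g*g) * (Bb * cm)) * dA
        = sΦ g * (dB * dA) - sΦ (g*g) * ((Bb * cm) * dA) := by noncomm_ring
      _ = sΦ g * (dB * dA) + sΦ (g*g) * (X * cm) := by rw [e, mul_neg, sub_neg_eq_add]
  have step2 : sΦ (-(g*g)) * (X * X) = sΦ g * (dB * dA) + sΦ (g*g) * (X * cm) := by
    rw [hrel, hsneg]
    have e5 : sΦ (g*g) * (sΦ f' * (dB * dA)) = sΦ g * (dB * dA) := by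
      rw [← mul_assoc, hsmul2, hsggf]
    calc -(sΦ (g*g)) * (-(X * cm) - sΦ f' * (dB * dA))
        = sΦ (g*g) * (sΦ f' * (dB * dA)) + sΦ (g*g) * (X * cm) := by noncomm_ring
      _ = sΦ g * (dB * dA) + sΦ (g*g) * (X * cm) := by rw [e5]
  have hdAinvdA : dAinv * dA = sΦ (-(g*g)) * (X * X) := by rw [step1, ← step2]
  -- powers
  have hcommXX : Commute (sΦ (-(g*g))) (X * X) :=
    Matrix.scalar_commute _ (fun r' => Algebra.commutes _ r') _
  have hpowL : (dAinv * dA) ^ t = sΦ ((-(g*g))^t) * X ^ (2*t) := by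
    rw [hdAinvdA, hcommXX.mul_pow, hspow, pow_mul, pow_two]
  have hXpow : X * X ^ (2*t) = X ^ (2*t+1) := by rw [← pow_succ']
  have lhs_eq : Matrix.trace ((Ring.inverse A').map φ * dA * ((dAinv * dA) ^ t))
      = φ (g * (-(g*g))^t) * Matrix.trace (X ^ (2*t+1)) := by
    rw [hpowL, hAinvφ]
    have e1 : (sΦ g * Bb) * dA * (sΦ ((-(g*g))^t) * X ^ (2*t))
        = sΦ (g * (-(g*g))^t) * X ^ (2*t+1) := by
      rw [mul_assoc (sΦ g) Bb dA, ← hXdef, mul_assoc (sΦ g) X, hsmul, hXpow,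
        ← mul_assoc, hsmul2]
    rw [e1]
    simp only [hsΦ]
    rw [aux_trace_scalar_mul]
  -- right-hand side
  have h5 : sΦ f' * (dB * dA) = -(X * X + X * cm) := by rw [hrel]; noncomm_ring
  have hdBdA : dB * dA = sΦ (-g) * (X * X + X * cm) := by
    have h6 : dB * dA = sΦ g * (sΦ f' * (dB * dA)) := by
      rw [← mul_assoc, hsmul2, mul_comm g f', hfg, hsone, one_mul]
    rw [h6, h5, mul_neg, ← neg_mul, ← hsneg]
  have hcommP : Commute (sΦ (-g)) (X * X + X * cm) :=
    Matrix.scalar_commute _ (fun r' => Algebra.commutes _ r') _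
  have rhs_eq : Matrix.trace (Bb * dA * ((dB * dA) ^ t))
      = φ ((-g)^t) * Matrix.trace (X ^ (2*t+1)) := by
    rw [hdBdA, hcommP.mul_pow, hspow, ← hXdef, hsmul]
    simp only [hsΦ]
    rw [aux_trace_scalar_mul]
    rw [hcmdef, aux_core h2L X hXmem hcmem t]
  rw [lhs_eq, rhs_eq, ← mul_assoc, ← _root_.map_mul φ]
  congr 2
  ring

end Main

variable (k : Type*) [Field k] [CharZero k]
variable (Q : Type*) [CommRing Q] [Algebra k Q] (f : Q)

-- `L = Q[1/f]`, a `k`-algebra via `k → Q → Q[1/f]`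
noncomputable local instance algkL :
    Algebra k (Localization.Away f) :=
  ((algebraMap Q (Localization.Away f)).comp (algebraMap k Q)).toAlgebra

set_option synthInstance.maxHeartbeats 1000000 in
set_option maxHeartbeats 2000000 in
theorem trace_inverse_matrix_factorization_identity
    (n : ℕ) (A B : Matrix (Fin n) (Fin n) Q)
    (hAB : A * B = f • (1 : Matrix (Fin n) (Fin n) Q))
    (hBA : B * A = f • (1 : Matrix (Fin n) (Fin n) Q))
    (s : ℕ) (hs : 1 ≤ s) :
    letI L := Localization.Away f
    letI Λ := ExteriorAlgebra L (KaehlerDifferential k L)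
    letI dE : L → Λ := fun a => ExteriorAlgebra.ι L (KaehlerDifferential.D k L a)
    letI finv : L := IsLocalization.Away.invSelf f
    letI A' := A.map (algebraMap Q L)
    letI Ainv := Ring.inverse A'   -- `A⁻¹` over `Q[1/f]`
    letI dA := A'.map dE           -- entrywise `d` of `A`
    letI dB := (B.map (algebraMap Q L)).map dE  -- entrywise `d` of `B`
    letI dAinv := Ainv.map dE      -- entrywise `d` of `A⁻¹`
    IsUnit A' →
    Matrix.trace (Ainv.map (algebraMap L Λ) * dA * (dAinv * dA) ^ (s - 1))
      = algebraMap L Λ (finv ^ s) *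
          Matrix.trace ((B.map (algebraMap Q L)).map (algebraMap L Λ) * dA *
            (dB * dA) ^ (s - 1)) := by
  intro hU
  obtain ⟨t, rfl⟩ : ∃ t, s = t + 1 := ⟨s - 1, (Nat.succ_pred_eq_of_pos hs).symm⟩
  have hmap : ∀ (M N : Matrix (Fin n) (Fin n) Q), M * N = f • 1 →
      (M.map (algebraMap Q (Localization.Away f)))
          * (N.map (algebraMap Q (Localization.Away f)))
        = (algebraMap Q (Localization.Away f) f) • 1 := by
    intro M N h
    rw [← Matrix.map_mul, h]
    ext i j
    by_cases hij : i = j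
    · subst hij
      simp [Matrix.map_apply, Matrix.smul_apply, Matrix.one_apply_eq]
    · simp [Matrix.map_apply, Matrix.smul_apply, Matrix.one_apply_ne hij]
  have hfg : (algebraMap Q (Localization.Away f) f) * IsLocalization.Away.invSelf f = 1 :=
    IsLocalization.Away.mul_invSelf f
  have hmain := main_aux (k := k) (algebraMap Q (Localization.Away f) f)
      (IsLocalization.Away.invSelf f) hfg (A.map (algebraMap Q (Localization.Away f)))
      (B.map (algebraMap Q (Localization.Away f))) (hmap A B hAB) (hmap B A hBA) t
  simpa [Nat.add_sub_cancel] using hmain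
end
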